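/- Let S_1, ..., S_r ∈ 𝒮 with r even and ε ≥ 0 be such that x := (1/r) Σ_{j=1}^r χ^{S_j} satisfies property (★), and suppose that for every narrow cut C ∈ 𝒞 there exists h ∈ {1, ..., r} with h/r ≥ 2 − x*(C) − ε and |C ∩ S_j| = 1 for all j = 1, ..., h. Set δ := 0.126, γ_j := δ for j ≤ r/2 and γ_j := 1 − δ for j > r/2, and let β ∈ [0, 1/2) satisfy β/(1 − 2β) = 3.327. Then for every narrow cut C_i (i = 0, ..., ℓ): (1/r) Σ_{j=1}^r b_{j,C_i} ≥ 3.327 · (2 − x*(C_i) − ε) · (1/r) · |{j : |S_j ∩ C_i| is even}|. -/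

import Mathlib

open Finset SimpleGraph

attribute [local instance 10] Classical.propDecidable

noncomputable section

namespace STT

variable {V : Type*} [Fintype V] [DecidableEq V]

/-- `δ(U)`: the set of edges of the complete graph on `V` with exactly one endpoint in `U`. -/
def cutOf (U : Finset V) : Finset (Sym2 V) :=
  Finset.univ.filter fun e => ∃ u v : V, e = Sym2.mk u v ∧ u ∈ U ∧ v ∉ U

/-- `E[U]`: the set of edges with both endpoints in `U`. -/
def within (U : Finset V) : Finset (Sym2 V) :=
  Finset.univ.filter fun e => ¬e.IsDiag ∧ ∀ v ∈ e, v ∈ U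

/-- `x(F) := ∑_{e ∈ F} x_e`. -/
def xval (x : Sym2 V → ℝ) (F : Finset (Sym2 V)) : ℝ := ∑ e ∈ F, x e

/-- characteristic vector `χ^S` of an edge set `S`. -/
def chi (S : Finset (Sym2 V)) : Sym2 V → ℝ := fun e => if e ∈ S then 1 else 0

/-- `S` is the edge set of a spanning tree of the complete graph on `V`. -/
def IsSpanningTree (S : Finset (Sym2 V)) : Prop :=
  (∀ e ∈ S, ¬e.IsDiag) ∧
    (SimpleGraph.fromEdgeSet (↑S : Set (Sym2 V))).Connected ∧
    S.card = Fintype.card V - 1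

/-- the induced subgraph `(V,S)[M]` is connected. -/
def InducedConn (S : Finset (Sym2 V)) (M : Finset V) : Prop :=
  (SimpleGraph.induce (↑M : Set V) (SimpleGraph.fromEdgeSet (↑S : Set (Sym2 V)))).Connected

/-- `x` is a feasible solution of the `s`-`t`-path LP. -/
def LPFeasible (s t : V) (x : Sym2 V → ℝ) : Prop :=
  (∀ e : Sym2 V, ¬e.IsDiag → 0 ≤ x e) ∧
    (∀ e : Sym2 V, e.IsDiag → x e = 0) ∧
    (∀ U : Finset V, U.Nonempty → U ≠ Finset.univ → Even (U ∩ {s, t}).card →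
      2 ≤ xval x (cutOf U)) ∧
    (∀ U : Finset V, U.Nonempty → U ≠ Finset.univ → ¬Even (U ∩ {s, t}).card →
      1 ≤ xval x (cutOf U)) ∧
    (∀ v : V, v ≠ s → v ≠ t → xval x (cutOf {v}) = 2) ∧
    xval x (cutOf {s}) = 1 ∧ xval x (cutOf {t}) = 1

/-- `C` is a narrow cut w.r.t. `x`. -/
def IsNarrowCut (x : Sym2 V → ℝ) (C : Finset (Sym2 V)) : Prop :=
  ∃ U : Finset V, U.Nonempty ∧ U ≠ Finset.univ ∧ C = cutOf U ∧ xval x C < 2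

/-- property (★) for `x` w.r.t. `x*` and `ε`. -/
def StarProp (s t : V) (xstar : Sym2 V → ℝ) (ε : ℝ) (x : Sym2 V → ℝ) : Prop :=
  xval x (cutOf {s}) = 1 ∧ xval x (cutOf {t}) = 1 ∧
    ∀ F : Finset (Sym2 V), xval xstar F - ε ≤ xval x F ∧ xval x F ≤ xval xstar F + ε

/-- `θ_i := ⌈r (2 − x*(C_i) − ε)⌉` where `C_i = δ(U_i)`. -/
def theta (r : ℕ) (xstar : Sym2 V → ℝ) (ε : ℝ) (U : ℕ → Finset V) (i : ℕ) : ℤ :=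
  ⌈(r : ℝ) * (2 - xval xstar (cutOf (U i)) - ε)⌉

/-- `c(x) = ∑_{e={u,v}∈E} c(u,v) x_e` (each unordered pair counted once). -/
def cost (c : V → V → ℝ) (x : Sym2 V → ℝ) : ℝ :=
  (∑ u : V, ∑ v : V, c u v * x (Sym2.mk u v)) / 2

/-- the finset of all narrow cuts. -/
def NarrowCuts (xstar : Sym2 V → ℝ) : Finset (Finset (Sym2 V)) :=
  Finset.univ.filter fun C => IsNarrowCut xstar C

/-- degree of `v` in the edge set `S`. -/
def degIn (S : Finset (Sym2 V)) (v : V) : ℕ := (S.filter fun e => v ∈ e).card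

/-- `T_S`: vertices whose degree in `S` has the wrong parity. -/
def wrongParity (s t : V) (S : Finset (Sym2 V)) : Finset V :=
  Finset.univ.filter fun v =>
    if v = s ∨ v = t then Even (degIn S v) else ¬Even (degIn S v)

/-- `P` is the edge set of the (unique) `a`-`b`-path in `S`. -/
def IsPathEdges (a b : V) (S P : Finset (Sym2 V)) : Prop :=
  ∃ w : (SimpleGraph.fromEdgeSet (↑S : Set (Sym2 V))).Walk a b,
    w.IsPath ∧ P = w.edges.toFinset

/-- the parity-correction vector `z^S` (for the `s`-`t`-path edge set `IS ⊆ S`). -/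
def zvec (xstar : Sym2 V → ℝ) (β ε γS : ℝ) (eC : Finset (Sym2 V) → Sym2 V)
    (S IS : Finset (Sym2 V)) : Sym2 V → ℝ := fun g =>
  (1 - 2 * β) * γS * chi IS g +
    ∑ C ∈ (NarrowCuts xstar).filter (fun C => Even (S ∩ C).card),
      max 0 (β * (2 - xval xstar C - ε) - (1 - 2 * β) * γS) * chi {eC C} g

/-- the vector `y^S`. -/
def yvec (xstar : Sym2 V → ℝ) (β ε γS : ℝ) (eC : Finset (Sym2 V) → Sym2 V)
    (S IS : Finset (Sym2 V)) : Sym2 V → ℝ := fun g =>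
  β * (1 + ε) * xstar g + (1 - 2 * β) * chi (S \ IS) g + zvec xstar β ε γS eC S IS g

/-- the benefit `b_{S,C}`. -/
def benefit (xstar : Sym2 V → ℝ) (β ε γS : ℝ) (S C : Finset (Sym2 V)) : ℝ :=
  if (S ∩ C).card = 1 then 1 - γS
  else if Even (S ∩ C).card then min (β * (2 - xval xstar C - ε) / (1 - 2 * β)) γS
  else 0

lemma numeric (M H1 H2 K1 K2 q : ℝ) (hM : 0 < M)
    (hH1 : 0 ≤ H1) (hH2 : 0 ≤ H2) (hK1 : 0 ≤ K1) (hK2 : 0 ≤ K2)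
    (hk1 : K1 ≤ M - H1) (hk2 : K2 ≤ M - H2)
    (hc : H2 = 0 ∨ H1 = M) (hq : q * (2 * M) ≤ H1 + H2) :
    3.327 * q * (K1 + K2) ≤
      0.874 * H1 + 0.126 * H2 + min (3.327 * q) 0.126 * K1 +
        min (3.327 * q) (1 - 0.126) * K2 := by
  rcases le_or_gt (3.327 * q) 0.126 with h1 | h1
  · rw [min_eq_left h1, min_eq_left (by linarith)]
    nlinarith
  · rw [min_eq_right h1.le]
    rcases le_or_gt (3.327 * q) (1 - 0.126) with h2 | h2
    · rw [min_eq_left h2]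
      rcases hc with hc | hc
      · nlinarith [mul_nonneg (by linarith : (0:ℝ) ≤ 3.327 * q - 0.126)
            (by linarith : (0:ℝ) ≤ M - H1 - K1),
          mul_nonneg (by linarith : (0:ℝ) ≤ H1 - q * (2 * M))
            (by linarith : (0:ℝ) ≤ M - H1),
          sq_nonneg (6.654 * H1 - 1.831 * M), mul_pos hM hM, hM.le]
      · nlinarith [mul_nonneg (by linarith : (0:ℝ) ≤ 3.327 * q - 0.126)
            (by linarith : (0:ℝ) ≤ -K1), hM.le]
    · rw [min_eq_right h2.le]
      rcases hc with hc | hc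
      · nlinarith [mul_nonneg (by linarith : (0:ℝ) ≤ 3.327 * q - 0.126)
            (by linarith : (0:ℝ) ≤ M - H1 - K1),
          mul_nonneg (by linarith : (0:ℝ) ≤ 3.327 * q - (1 - 0.126))
            (by linarith : (0:ℝ) ≤ M - K2),
          mul_nonneg (by linarith : (0:ℝ) ≤ H1 - q * (2 * M))
            (by linarith : (0:ℝ) ≤ M - H1),
          mul_nonneg (by linarith : (0:ℝ) ≤ H1 - q * (2 * M)) hM.le,
          sq_nonneg (6.654 * H1 - 5.158 * M), mul_pos hM hM]
      · nlinarith [mul_nonneg (by linarith : (0:ℝ) ≤ 3.327 * q - 0.126)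
            (by linarith : (0:ℝ) ≤ -K1),
          mul_nonneg (by linarith : (0:ℝ) ≤ 3.327 * q - (1 - 0.126))
            (by linarith : (0:ℝ) ≤ M - H2 - K2),
          mul_nonneg (by linarith : (0:ℝ) ≤ M + H2 - q * (2 * M))
            (by linarith : (0:ℝ) ≤ M - H2),
          sq_nonneg (6.654 * H2 - 1.496 * M), mul_pos hM hM]

theorem stmt11 {V : Type*} [Fintype V] [DecidableEq V]
    (hV : 2 ≤ Fintype.card V) (s t : V) (hst : s ≠ t)
    (xstar : Sym2 V → ℝ) (hfeas : LPFeasible s t xstar)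
    (r : ℕ) (hr : 1 ≤ r) (S : ℕ → Finset (Sym2 V))
    (hS : ∀ j ∈ Finset.Icc 1 r, IsSpanningTree (S j))
    (ε : ℝ) (hε : 0 ≤ ε)
    (hstar : StarProp s t xstar ε (fun e => (∑ j ∈ Finset.Icc 1 r, chi (S j) e) / (r : ℝ)))
    (ℓ : ℕ) (U : ℕ → Finset V)
    (hU0 : U 0 = {s}) (hUl : U ℓ = Finset.univ \ {t})
    (hUchain : ∀ i < ℓ, U i ⊂ U (i + 1))
    (hUnarrow : ∀ C : Finset (Sym2 V), IsNarrowCut xstar C ↔ ∃ i ≤ ℓ, C = cutOf (U i))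
    (hreven : Even r)
    (hGao : ∀ C : Finset (Sym2 V), IsNarrowCut xstar C →
      ∃ h ∈ Finset.Icc 1 r, 2 - xval xstar C - ε ≤ (h : ℝ) / (r : ℝ) ∧
        ∀ j ∈ Finset.Icc 1 h, (C ∩ S j).card = 1)
    (γ : ℕ → ℝ)
    (hγ : ∀ j : ℕ, (j ≤ r / 2 → γ j = 0.126) ∧ (r / 2 < j → γ j = 1 - 0.126))
    (β : ℝ) (hβ0 : 0 ≤ β) (hβhalf : β < 1 / 2) (hβ : β / (1 - 2 * β) = 3.327) :
    ∀ i ≤ ℓ,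
      3.327 * (2 - xval xstar (cutOf (U i)) - ε) *
          ((((Finset.Icc 1 r).filter fun j => Even ((S j) ∩ cutOf (U i)).card).card : ℝ) / (r : ℝ)) ≤
        (∑ j ∈ Finset.Icc 1 r, benefit xstar β ε (γ j) (S j) (cutOf (U i))) / (r : ℝ) := by
  intro i hi
  have hnarrow : IsNarrowCut xstar (cutOf (U i)) := (hUnarrow _).mpr ⟨i, hi, rfl⟩
  obtain ⟨h, hhmem, hqh, hone⟩ := hGao _ hnarrow
  rw [Finset.mem_Icc] at hhmem
  obtain ⟨hh1, hhr⟩ := hhmem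
  set C : Finset (Sym2 V) := cutOf (U i) with hCdef
  set q : ℝ := 2 - xval xstar C - ε with hqdef
  obtain ⟨w, hw⟩ := hreven
  set m : ℕ := r / 2 with hmdef
  have hm2 : 2 * m = r := by omega
  have hmpos : 0 < m := by omega
  have hrpos : (0:ℝ) < r := by exact_mod_cast (by omega : 0 < r)
  have hβq : β * (2 - xval xstar C - ε) / (1 - 2 * β) = 3.327 * q := by
    rw [hqdef, ← hβ, div_mul_eq_mul_div]
  set h1 : ℕ := min h m with hh1def
  have hh1m : h1 ≤ m := min_le_right h m
  have hh1h : h1 ≤ h := min_le_left h m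
  have hh1cases : (h ≤ m → h1 = h) ∧ (m < h → h1 = m) :=
    ⟨fun hc => min_eq_left hc, fun hc => min_eq_right hc.le⟩
  have hγle : ∀ j : ℕ, γ j ≤ 1 := by
    intro j
    rcases le_or_gt j m with hj | hj
    · rw [(hγ j).1 hj]; norm_num
    · rw [(hγ j).2 hj]; norm_num
  have hcard1 : ∀ j : ℕ, 1 ≤ j → j ≤ h → (S j ∩ C).card = 1 := by
    intro j hj1 hj2
    rw [Finset.inter_comm]
    exact hone j (Finset.mem_Icc.mpr ⟨hj1, hj2⟩)
  set E' : Finset ℕ := (Finset.Ioc h r).filter (fun j => Even ((S j ∩ C).card)) with hE'def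
  have hEeq : (Finset.Icc 1 r).filter (fun j => Even ((S j) ∩ C).card) = E' := by
    ext j
    simp only [hE'def, Finset.mem_filter, Finset.mem_Icc, Finset.mem_Ioc]
    constructor
    · rintro ⟨⟨hj1, hjr⟩, hev⟩
      refine ⟨⟨?_, hjr⟩, hev⟩
      by_contra hle
      push_neg at hle
      rw [hcard1 j hj1 hle] at hev
      simp at hev
    · rintro ⟨⟨hj1, hjr⟩, hev⟩
      exact ⟨⟨by omega, hjr⟩, hev⟩
  set E1 : Finset ℕ := E'.filter (fun j => j ≤ m) with hE1def
  set E2 : Finset ℕ := E'.filter (fun j => ¬ j ≤ m) with hE2def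
  have hcardsplit : E1.card + E2.card = E'.card :=
    Finset.card_filter_add_card_filter_not _
  have hk1 : E1.card ≤ m - h1 := by
    have hsub : E1 ⊆ Finset.Ioc h1 m := by
      intro j hj
      simp only [hE1def, hE'def, Finset.mem_filter, Finset.mem_Ioc] at hj
      obtain ⟨⟨⟨hja, hjb⟩, _⟩, hjc⟩ := hj
      simp only [Finset.mem_Ioc]
      exact ⟨by omega, hjc⟩
    calc E1.card ≤ (Finset.Ioc h1 m).card := Finset.card_le_card hsub
      _ = m - h1 := Nat.card_Ioc _ _
  have hk2 : E2.card ≤ m - (h - h1) := by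
    have hsub : E2 ⊆ Finset.Ioc (max h m) r := by
      intro j hj
      simp only [hE2def, hE'def, Finset.mem_filter, Finset.mem_Ioc] at hj
      obtain ⟨⟨⟨hja, hjb⟩, _⟩, hjc⟩ := hj
      simp only [Finset.mem_Ioc]
      exact ⟨by omega, hjb⟩
    calc E2.card ≤ (Finset.Ioc (max h m) r).card := Finset.card_le_card hsub
      _ = r - max h m := Nat.card_Ioc _ _
      _ = m - (h - h1) := by omega
  -- sum lower bound
  have hsum : 0.874 * (h1 : ℝ) + 0.126 * ((h - h1 : ℕ) : ℝ)
      + min (3.327 * q) 0.126 * (E1.card : ℝ)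
      + min (3.327 * q) (1 - 0.126) * (E2.card : ℝ)
      ≤ ∑ j ∈ Finset.Icc 1 r, benefit xstar β ε (γ j) (S j) C := by
    have hIcc : Finset.Icc 1 r = Finset.Ioc 0 r := by
      rw [← Finset.Icc_add_one_left_eq_Ioc]
      rfl
    rw [hIcc, ← Finset.sum_Ioc_consecutive _ (Nat.zero_le h) hhr]
    have hpart1 : 0.874 * (h1 : ℝ) + 0.126 * ((h - h1 : ℕ) : ℝ)
        ≤ ∑ j ∈ Finset.Ioc 0 h, benefit xstar β ε (γ j) (S j) C := by
      rw [← Finset.sum_Ioc_consecutive _ (Nat.zero_le h1) hh1h]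
      have hA' : ∀ j ∈ Finset.Ioc 0 h1,
          benefit xstar β ε (γ j) (S j) C = 0.874 := by
        intro j hj
        rw [Finset.mem_Ioc] at hj
        have hc1 : (S j ∩ C).card = 1 := hcard1 j (by omega) (by omega)
        rw [benefit, if_pos hc1, (hγ j).1 (by omega)]
        norm_num
      have hB' : ∀ j ∈ Finset.Ioc h1 h,
          benefit xstar β ε (γ j) (S j) C = 0.126 := by
        intro j hj
        rw [Finset.mem_Ioc] at hj
        have hc1 : (S j ∩ C).card = 1 := hcard1 j (by omega) hj.2
        have hjm : m < j := by
          rcases le_or_gt h m with hc | hc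
          · have := hh1cases.1 hc; omega
          · have := hh1cases.2 hc; omega
        rw [benefit, if_pos hc1, (hγ j).2 hjm]
        norm_num
      rw [Finset.sum_congr rfl hA', Finset.sum_congr rfl hB', Finset.sum_const,
        Finset.sum_const, Nat.card_Ioc, Nat.card_Ioc, nsmul_eq_mul, nsmul_eq_mul,
        Nat.sub_zero]
      apply le_of_eq
      ring
    have hpart2 : min (3.327 * q) 0.126 * (E1.card : ℝ)
        + min (3.327 * q) (1 - 0.126) * (E2.card : ℝ)
        ≤ ∑ j ∈ Finset.Ioc h r, benefit xstar β ε (γ j) (S j) C := by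
      rw [← Finset.sum_filter_add_sum_filter_not (Finset.Ioc h r)
        (fun j => Even ((S j ∩ C).card)), ← hE'def]
      have hnonneg : 0 ≤ ∑ j ∈ (Finset.Ioc h r).filter
          (fun j => ¬ Even ((S j ∩ C).card)), benefit xstar β ε (γ j) (S j) C := by
        refine Finset.sum_nonneg fun j hj => ?_
        simp only [Finset.mem_filter] at hj
        rw [benefit]
        by_cases hc1 : (S j ∩ C).card = 1
        · rw [if_pos hc1]; linarith [hγle j]
        · rw [if_neg hc1, if_neg hj.2]
      have heven' : ∀ j ∈ E', benefit xstar β ε (γ j) (S j) C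
          = min (3.327 * q) (γ j) := by
        intro j hj
        simp only [hE'def, Finset.mem_filter] at hj
        have hc1 : (S j ∩ C).card ≠ 1 := by
          intro hcon; rw [hcon] at hj; simp at hj
        rw [benefit, if_neg hc1, if_pos hj.2, hβq]
      rw [Finset.sum_congr rfl heven',
        ← Finset.sum_filter_add_sum_filter_not E' (fun j => j ≤ m), ← hE1def, ← hE2def]
      have e1' : ∀ j ∈ E1, min (3.327 * q) (γ j) = min (3.327 * q) 0.126 := by
        intro j hj
        simp only [hE1def, Finset.mem_filter] at hj
        rw [(hγ j).1 hj.2]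
      have e2' : ∀ j ∈ E2, min (3.327 * q) (γ j) = min (3.327 * q) (1 - 0.126) := by
        intro j hj
        simp only [hE2def, Finset.mem_filter] at hj
        rw [(hγ j).2 (by omega)]
      rw [Finset.sum_congr rfl e1', Finset.sum_congr rfl e2', Finset.sum_const,
        Finset.sum_const, nsmul_eq_mul, nsmul_eq_mul]
      nlinarith [hnonneg]
    linarith
  have hkey : 3.327 * q * ((E1.card : ℝ) + (E2.card : ℝ))
      ≤ 0.874 * (h1 : ℝ) + 0.126 * ((h - h1 : ℕ) : ℝ)
        + min (3.327 * q) 0.126 * (E1.card : ℝ)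
        + min (3.327 * q) (1 - 0.126) * (E2.card : ℝ) := by
    have hrcast : (r : ℝ) = 2 * (m : ℝ) := by exact_mod_cast hm2.symm
    have p1 : (0:ℝ) < (m:ℝ) := by exact_mod_cast hmpos
    have p6 : (E1.card : ℝ) ≤ (m:ℝ) - (h1:ℝ) := by
      have := (Nat.cast_le (α := ℝ)).mpr hk1
      rw [Nat.cast_sub hh1m] at this
      linarith
    have p7 : (E2.card : ℝ) ≤ (m:ℝ) - ((h - h1 : ℕ) : ℝ) := by
      have := (Nat.cast_le (α := ℝ)).mpr hk2
      rw [Nat.cast_sub (by omega : h - h1 ≤ m)] at this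
      linarith
    have p8 : ((h - h1 : ℕ) : ℝ) = 0 ∨ (h1:ℝ) = (m:ℝ) := by
      rcases le_or_gt h m with hc | hc
      · left
        have hz : h - h1 = 0 := by have := hh1cases.1 hc; omega
        rw [hz]; norm_num
      · right
        exact_mod_cast hh1cases.2 hc
    have p9 : q * (2 * (m:ℝ)) ≤ (h1:ℝ) + ((h - h1 : ℕ) : ℝ) := by
      have hqr : q * (r : ℝ) ≤ (h : ℝ) := (le_div_iff₀ hrpos).mp hqh
      have hcast : ((h1 : ℝ) + ((h - h1 : ℕ) : ℝ)) = (h : ℝ) := by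
        rw [Nat.cast_sub hh1h]; ring
      rw [hcast, ← hrcast]
      exact hqr
    exact numeric (m : ℝ) (h1 : ℝ) ((h - h1 : ℕ) : ℝ) (E1.card : ℝ) (E2.card : ℝ) q
      p1 (Nat.cast_nonneg _) (Nat.cast_nonneg _) (Nat.cast_nonneg _) (Nat.cast_nonneg _)
      p6 p7 p8 p9
  rw [hEeq]
  have hccast : (E'.card : ℝ) = (E1.card : ℝ) + (E2.card : ℝ) := by
    exact_mod_cast hcardsplit.symm
  have hmain : 3.327 * q * (E'.card : ℝ) ≤ ∑ j ∈ Finset.Icc 1 r,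
      benefit xstar β ε (γ j) (S j) C := by
    rw [hccast]
    linarith
  calc 3.327 * q * ((E'.card : ℝ) / (r : ℝ)) = (3.327 * q * (E'.card : ℝ)) / r := by ring
    _ ≤ _ := div_le_div_of_nonneg_right hmain hrpos.le



end STT

end
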